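/- arXiv:1508.02777 — 5 statements merged into one kernel-verified Lean document; each statement's English description precedes it below -/
import Mathlib

section
/- Let S be a quadratic algebra over a Dedekind domain R, and let I be a fractional ideal of S whose associated quadratic form φ : I → a⁻¹·Λ²I (given by ω ↦ ω ∧ ξω) is primitive, i.e. does not factor through a proper sublattice of a⁻¹·Λ²I. Then I is invertible: there exists a fractional ideal J of S with IJ = S. -/
open scoped nonZeroDivisors

/-- The coordinate of `x ∧ y` in `Λ²_K S_K`, with respect to a `K`-basis `b` of the
two-dimensional algebra `S_K`, normalized so that `α(b 0 ∧ b 1) = 1`.  When `b 0 = 1` and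
`b 1 = ξ` this is the orientation `α` of the paper applied to `x ∧ y`. -/
noncomputable def wedgeC {K A : Type*} [Field K] [CommRing A] [Algebra K A]
    (b : Module.Basis (Fin 2) K A) (x y : A) : K :=
  b.repr x 0 * b.repr y 1 - b.repr x 1 * b.repr y 0

/-- `α(Λ² I)`: the `R`-submodule of `K` generated by all `α(x ∧ y)` for `x, y ∈ I`.  For a
rank-2 lattice `I` in `S_K` this realizes (the image under the orientation of) its top
exterior power. -/
noncomputable def wedgeIdeal (R : Type*) {K A : Type*} [CommRing R] [Field K] [Algebra R K]
    [CommRing A] [Algebra K A] [Algebra R A] (b : Module.Basis (Fin 2) K A) (I : Submodule R A) :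
    Submodule R K :=
  Submodule.span R {k : K | ∃ x ∈ I, ∃ y ∈ I, wedgeC b x y = k}

/-- The image (as an `R`-submodule of `K`) of the quadratic form `ω ↦ α(ω ∧ ξω)`
associated to an ideal `I`, where `ξ = b 1`. -/
noncomputable def formIdeal (R : Type*) {K A : Type*} [CommRing R] [Field K] [Algebra R K]
    [CommRing A] [Algebra K A] [Algebra R A] (b : Module.Basis (Fin 2) K A) (I : Submodule R A) :
    Submodule R K :=
  Submodule.span R {k : K | ∃ x ∈ I, wedgeC b x (b 1 * x) = k}

/-!
Let `σ(x) = tr(x) - x` be the conjugation of `S_K`. For `x, y ∈ S_K` one computes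
`x σ(y) = c(x, y) - α(x ∧ y) ξ` with `c(x, y) = tr(ξ) α(x ∧ y) - α(ξx ∧ y)`, and `c(x, x) = α(x ∧ ξx)`.
Because `S` is a ring containing `aξ`, we have `a tr(ξ) ⊆ R` and `aξI ⊆ I`, so `a c(x, y) ⊆ α(Λ²I)`;
primitivity then puts `c(x, y)` into `N = a⁻¹α(Λ²I)`, the image of the quadratic form. Hence
`I σ(I) = N + α(Λ²I) ξ = N (R + aξ) = N S`, and since `N` is an invertible fractional ideal of the
Dedekind domain `R`, the module `J = N⁻¹ σ(I) S` satisfies `IJ = S`.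
-/

theorem Submodule.mem_mul_of_forall_mul_mem {R K : Type*} [CommSemiring R] [CommSemiring K]
    [Algebra R K] {a a' M : Submodule R K} (ha : a' * a = 1) {k : K}
    (h : ∀ s ∈ a, s * k ∈ M) : k ∈ a' * M := by
  have hk : a * span R {k} ≤ M := mul_le.2 fun s hs y hy => by
    obtain ⟨r, rfl⟩ := mem_span_singleton.1 hy
    rw [mul_smul_comm]
    exact M.smul_mem r (h s hs)
  have : span R {k} ≤ a' * M := by
    calc span R {k} = a' * a * span R {k} := by rw [ha, one_mul]
      _ ≤ a' * M := by rw [mul_assoc]; exact mul_le_mul_right hk _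
  exact this (mem_span_singleton_self k)

theorem Submodule.map_toSpanSingleton_mul_map_toSpanSingleton {R K A : Type*} [CommSemiring R]
    [CommSemiring K] [Algebra R K] [CommSemiring A] [Algebra K A] [Algebra R A]
    [IsScalarTower R K A] (v w : A) (M N : Submodule R K) :
    map ((LinearMap.toSpanSingleton K A v).restrictScalars R) M *
        map ((LinearMap.toSpanSingleton K A w).restrictScalars R) N =
      map ((LinearMap.toSpanSingleton K A (v * w)).restrictScalars R) (M * N) := by
  rw [mul_eq_map₂, mul_eq_map₂, map₂_map_map, map_map₂]
  congr 1
  ext m n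
  simp [smul_smul, mul_comm]

theorem Submodule.map_toSpanSingleton_one_one {R K A : Type*} [CommSemiring R]
    [CommSemiring K] [Algebra R K] [CommSemiring A] [Algebra K A] [Algebra R A]
    [IsScalarTower R K A] :
    map ((LinearMap.toSpanSingleton K A 1).restrictScalars R) (1 : Submodule R K) =
      LinearMap.range (Algebra.linearMap R A) := by
  rw [one_eq_range, ← LinearMap.range_comp]
  congr 1
  ext
  simp [Algebra.smul_def]

theorem Subalgebra.mul_mem_of_mem_mul_toSubmodule {R A : Type*} [CommSemiring R] [CommSemiring A]
    [Algebra R A] (S : Subalgebra R A) (M : Submodule R A) {s x : A} (hs : s ∈ S)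
    (hx : x ∈ M * toSubmodule S) : s * x ∈ M * toSubmodule S := by
  have := Submodule.mul_mem_mul hx ((mem_toSubmodule S).2 hs)
  rwa [mul_assoc, S.isIdempotentElem_toSubmodule.eq, mul_comm x] at this

namespace Module.Basis

variable {K A : Type*} [Field K] [CommRing A] [Algebra K A] (b : Basis (Fin 2) K A)

noncomputable def wedge : A →ₗ[K] A →ₗ[K] K :=
  LinearMap.mk₂ K (wedgeC b)
    (fun _ _ _ => by simp only [wedgeC, map_add, Finsupp.add_apply]; ring)
    (fun _ _ _ => by simp only [wedgeC, map_smul, Finsupp.smul_apply, smul_eq_mul]; ring)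
    (fun _ _ _ => by simp only [wedgeC, map_add, Finsupp.add_apply]; ring)
    (fun _ _ _ => by simp only [wedgeC, map_smul, Finsupp.smul_apply, smul_eq_mul]; ring)

@[simp] lemma wedge_apply (x y : A) : b.wedge x y = wedgeC b x y := rfl

lemma wedgeC_smul_left (c : K) (x y : A) : wedgeC b (c • x) y = c * wedgeC b x y :=
  b.wedge.map_smul₂ c x y

lemma wedgeC_zero_one : wedgeC b (b 0) (b 1) = 1 := by
  simp [wedgeC, Basis.repr_self]

lemma eq_algebraMap_add_smul (hb0 : b 0 = 1) (x : A) :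
    x = algebraMap K A (b.repr x 0) + b.repr x 1 • b 1 := by
  conv_lhs => rw [← b.sum_repr x, Fin.sum_univ_two, hb0, ← Algebra.algebraMap_eq_smul_one]

lemma repr_algebraMap_add_smul (hb0 : b 0 = 1) (c d : K) (i : Fin 2) :
    b.repr (algebraMap K A c + d • b 1) i = if i = 0 then c else d := by
  rw [Algebra.algebraMap_eq_smul_one, ← hb0]
  fin_cases i <;> simp [Basis.repr_self]

lemma mul_eq_algebraMap_add_smul (hb0 : b 0 = 1) (x y : A) :
    x * y =
      algebraMap K A (b.repr x 0 * b.repr y 0 + b.repr (b 1 * b 1) 0 * b.repr x 1 * b.repr y 1) +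
        (b.repr x 0 * b.repr y 1 + b.repr x 1 * b.repr y 0 +
          b.repr (b 1 * b 1) 1 * b.repr x 1 * b.repr y 1) • b 1 := by
  have hξ := b.eq_algebraMap_add_smul hb0 (b 1 * b 1)
  conv_lhs => rw [b.eq_algebraMap_add_smul hb0 x, b.eq_algebraMap_add_smul hb0 y]
  simp only [Algebra.smul_def, map_add, map_mul] at *
  linear_combination (algebraMap K A (b.repr x 1) * algebraMap K A (b.repr y 1)) * hξ

lemma repr_mul_zero (hb0 : b 0 = 1) (x y : A) :
    b.repr (x * y) 0 =
      b.repr x 0 * b.repr y 0 + b.repr (b 1 * b 1) 0 * b.repr x 1 * b.repr y 1 := by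
  rw [b.mul_eq_algebraMap_add_smul hb0, repr_algebraMap_add_smul b hb0]; rfl

lemma repr_mul_one (hb0 : b 0 = 1) (x y : A) :
    b.repr (x * y) 1 = b.repr x 0 * b.repr y 1 + b.repr x 1 * b.repr y 0 +
      b.repr (b 1 * b 1) 1 * b.repr x 1 * b.repr y 1 := by
  rw [b.mul_eq_algebraMap_add_smul hb0, repr_algebraMap_add_smul b hb0]; rfl

lemma trace_eq (hb0 : b 0 = 1) (x : A) :
    Algebra.trace K A x = 2 * b.repr x 0 + b.repr (b 1 * b 1) 1 * b.repr x 1 := by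
  rw [Algebra.trace_eq_matrix_trace b, Matrix.trace_fin_two, Algebra.leftMulMatrix_eq_repr_mul,
    Algebra.leftMulMatrix_eq_repr_mul, b.repr_mul_zero hb0, b.repr_mul_one hb0]
  simp only [Module.Basis.repr_self, Finsupp.single_eq_same, Finsupp.single_eq_of_ne, ne_eq,
    zero_ne_one, one_ne_zero, not_false_eq_true]
  ring

lemma trace_basis_one (hb0 : b 0 = 1) : Algebra.trace K A (b 1) = b.repr (b 1 * b 1) 1 := by
  simp [b.trace_eq hb0, Basis.repr_self]

lemma wedgeC_self (x : A) : wedgeC b x x = 0 := by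
  rw [wedgeC, mul_comm, sub_self]

lemma wedgeC_swap (x y : A) : wedgeC b y x = -wedgeC b x y := by
  rw [wedgeC, wedgeC]; ring

end Module.Basis

section Conj

variable (K A : Type*) [Field K] [CommRing A] [Algebra K A]

noncomputable def traceConj : A →ₗ[K] A :=
  Algebra.linearMap K A ∘ₗ Algebra.trace K A - LinearMap.id

variable {K A}

lemma traceConj_apply (x : A) : traceConj K A x = algebraMap K A (Algebra.trace K A x) - x := rfl

lemma mul_traceConj {b : Module.Basis (Fin 2) K A} (hb0 : b 0 = 1) (x y : A) :
    x * traceConj K A y = algebraMap K A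
      (Algebra.trace K A (b 1) * wedgeC b x y - wedgeC b (b 1 * x) y) - wedgeC b x y • b 1 := by
  refine b.ext_elem (Fin.forall_fin_two.mpr ⟨?_, ?_⟩) <;>
  simp only [traceConj_apply, Algebra.algebraMap_eq_smul_one, map_sub, map_smul, mul_sub,
    mul_smul_comm, mul_one, Finsupp.sub_apply, Finsupp.smul_apply, b.repr_mul_zero hb0 x y,
    b.repr_mul_one hb0 x y, b.repr_mul_zero hb0 (b 1) x, b.repr_mul_one hb0 (b 1) x,
    b.trace_eq hb0, wedgeC]
  <;> rw [← hb0]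
  <;> simp only [Module.Basis.repr_self, Finsupp.single_eq_same, Finsupp.single_eq_of_ne, ne_eq,
    zero_ne_one, one_ne_zero, not_false_eq_true]
  <;> ring

lemma mul_traceConj_self {b : Module.Basis (Fin 2) K A} (hb0 : b 0 = 1) (x : A) :
    x * traceConj K A x = algebraMap K A (wedgeC b x (b 1 * x)) := by
  rw [mul_traceConj hb0, b.wedgeC_self, b.wedgeC_swap, zero_smul, sub_zero, mul_zero, zero_sub,
    neg_neg]

end Conj

section WedgeIdeal

variable {R K A : Type*} [CommRing R] [Field K] [Algebra R K] [CommRing A] [Algebra K A]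
  [Algebra R A] {b : Module.Basis (Fin 2) K A}

lemma wedgeIdeal_eq_map₂ [IsScalarTower R K A] (I : Submodule R A) :
    wedgeIdeal R b I = Submodule.map₂ (b.wedge.restrictScalars₁₂ R R) I I := by
  rw [Submodule.map₂_eq_span_image2]
  rfl

lemma wedgeIdeal_fg [IsScalarTower R K A] {I : Submodule R A} (hI : I.FG) :
    (wedgeIdeal R b I).FG := by
  rw [wedgeIdeal_eq_map₂]
  exact hI.map₂ _ hI

lemma wedgeC_mem_wedgeIdeal {I : Submodule R A} {x y : A} (hx : x ∈ I) (hy : y ∈ I) :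
    wedgeC b x y ∈ wedgeIdeal R b I :=
  Submodule.subset_span ⟨x, hx, y, hy, rfl⟩

lemma wedgeIdeal_ne_bot {I : Submodule R A} (hspan : Submodule.span K (I : Set A) = ⊤) :
    wedgeIdeal R b I ≠ ⊥ := by
  intro h
  have hvan : b.wedge = 0 :=
    LinearMap.ext_on hspan fun x hx => LinearMap.ext_on hspan fun y hy => by
      simpa [h] using wedgeC_mem_wedgeIdeal (b := b) hx hy
  simpa [b.wedgeC_zero_one] using congr($hvan (b 0) (b 1))

lemma exists_formIdeal_mul_eq_one [IsDedekindDomain R] [IsFractionRing R K] [IsScalarTower R K A]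
    {a : FractionalIdeal R⁰ K} (ha : a ≠ 0) {I : Submodule R A} (hfg : I.FG)
    (hspan : Submodule.span K (I : Set A) = ⊤)
    (hprim : formIdeal R b I = ((a⁻¹ : FractionalIdeal R⁰ K) : Submodule R K) *
      wedgeIdeal R b I) :
    ∃ N' : Submodule R K, formIdeal R b I * N' = 1 ∧ wedgeIdeal R b I * N' = a := by
  let W : FractionalIdeal R⁰ K :=
    ⟨wedgeIdeal R b I, FractionalIdeal.isFractional_of_fg (wedgeIdeal_fg hfg)⟩
  have hW : W ≠ 0 := FractionalIdeal.coeToSubmodule_ne_bot.1 (wedgeIdeal_ne_bot hspan)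
  have hN : ((a⁻¹ * W : FractionalIdeal R⁰ K) : Submodule R K) = formIdeal R b I := by
    rw [hprim, FractionalIdeal.coe_mul]; rfl
  refine ⟨↑(a⁻¹ * W)⁻¹, ?_, ?_⟩
  · rw [← hN, ← FractionalIdeal.coe_mul, mul_inv_cancel₀ (mul_ne_zero (inv_ne_zero ha) hW),
      FractionalIdeal.coe_one]
  · rw [show wedgeIdeal R b I = W from rfl, ← FractionalIdeal.coe_mul, mul_inv, inv_inv,
      mul_left_comm, mul_inv_cancel₀ hW, mul_one]

end WedgeIdeal

section QuadraticOrder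

variable {R K A : Type*} [CommRing R] [Field K] [Algebra R K] [CommRing A] [Algebra K A]
  [Algebra R A] [IsScalarTower R K A] {b : Module.Basis (Fin 2) K A} {a a' : Submodule R K}
  {S : Subalgebra R A}

variable (R b) in
/-- The lattice `R ⊕ aξ`, where `ξ = b 1`. -/
noncomputable def quadraticLattice (a : Submodule R K) : Submodule R A :=
  LinearMap.range (Algebra.linearMap R A) ⊔
    Submodule.map ((LinearMap.toSpanSingleton K A (b 1)).restrictScalars R) a

lemma smul_basis_one_mem (hS : Subalgebra.toSubmodule S = quadraticLattice R b a)
    {s : K} (hs : s ∈ a) : s • b 1 ∈ S := by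
  rw [← Subalgebra.mem_toSubmodule, hS]
  exact Submodule.mem_sup_right ⟨s, hs, rfl⟩

lemma repr_one_mem (hb0 : b 0 = 1) (hS : Subalgebra.toSubmodule S = quadraticLattice R b a)
    {z : A} (hz : z ∈ S) : b.repr z 1 ∈ a := by
  rw [← Subalgebra.mem_toSubmodule, hS, quadraticLattice, Submodule.mem_sup] at hz
  obtain ⟨_, ⟨r, rfl⟩, _, ⟨s, hs, rfl⟩, rfl⟩ := hz
  rwa [Algebra.linearMap_apply, IsScalarTower.algebraMap_apply R K A,
    LinearMap.restrictScalars_apply, LinearMap.toSpanSingleton_apply,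
    b.repr_algebraMap_add_smul hb0]

/-- `S` is closed under multiplication, so `a · a · tr ξ ⊆ a`; cancelling `a` gives
`a · tr ξ ⊆ R`. -/
lemma mul_trace_mem_one (hb0 : b 0 = 1) (hS : Subalgebra.toSubmodule S = quadraticLattice R b a)
    (ha : a' * a = 1) {s : K} (hs : s ∈ a) :
    s * Algebra.trace K A (b 1) ∈ (1 : Submodule R K) := by
  rw [← ha]
  refine Submodule.mem_mul_of_forall_mul_mem ha fun s' hs' => ?_
  have := repr_one_mem hb0 hS (S.mul_mem (smul_basis_one_mem hS hs') (smul_basis_one_mem hS hs))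
  rwa [smul_mul_smul, map_smul, Finsupp.smul_apply, smul_eq_mul, ← b.trace_basis_one hb0,
    mul_assoc] at this

variable {I : Submodule R A}

lemma trace_mul_wedgeC_sub_mem_formIdeal (hb0 : b 0 = 1) (hS : Subalgebra.toSubmodule S = quadraticLattice R b a)
    (ha : a' * a = 1) (hstab : ∀ s ∈ S, ∀ x ∈ I, s * x ∈ I)
    (hprim : formIdeal R b I = a' * wedgeIdeal R b I) {x y : A} (hx : x ∈ I) (hy : y ∈ I) :
    Algebra.trace K A (b 1) * wedgeC b x y - wedgeC b (b 1 * x) y ∈ formIdeal R b I := by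
  rw [hprim]
  refine Submodule.mem_mul_of_forall_mul_mem ha fun s hs => ?_
  obtain ⟨r, hr⟩ := Submodule.mem_one.1 (mul_trace_mem_one hb0 hS ha hs)
  have hsξ := smul_basis_one_mem hS hs
  have : s * (Algebra.trace K A (b 1) * wedgeC b x y - wedgeC b (b 1 * x) y) =
      r • wedgeC b x y - wedgeC b ((s • b 1) * x) y := by
    rw [Algebra.smul_def, hr, smul_mul_assoc, b.wedgeC_smul_left]
    ring
  rw [this]
  exact sub_mem (Submodule.smul_mem _ r (wedgeC_mem_wedgeIdeal hx hy))
    (wedgeC_mem_wedgeIdeal (hstab _ hsξ x hx) hy)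

lemma mul_map_traceConj (hb0 : b 0 = 1) (hS : Subalgebra.toSubmodule S = quadraticLattice R b a)
    (ha : a' * a = 1) (hstab : ∀ s ∈ S, ∀ x ∈ I, s * x ∈ I)
    (hprim : formIdeal R b I = a' * wedgeIdeal R b I) :
    I * I.map ((traceConj K A).restrictScalars R) =
      Submodule.map ((LinearMap.toSpanSingleton K A 1).restrictScalars R) (formIdeal R b I) ⊔
        Submodule.map ((LinearMap.toSpanSingleton K A (b 1)).restrictScalars R)
          (wedgeIdeal R b I) := by
  have hcoeff {x y : A} (hx : x ∈ I) (hy : y ∈ I) :=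
    trace_mul_wedgeC_sub_mem_formIdeal hb0 hS ha hstab hprim hx hy
  have hform : Submodule.map ((LinearMap.toSpanSingleton K A 1).restrictScalars R)
      (formIdeal R b I) ≤ I * I.map ((traceConj K A).restrictScalars R) := by
    rw [formIdeal, Submodule.map_span, Submodule.span_le]
    rintro _ ⟨_, ⟨x, hx, rfl⟩, rfl⟩
    rw [LinearMap.restrictScalars_apply, LinearMap.toSpanSingleton_apply,
      ← Algebra.algebraMap_eq_smul_one, ← mul_traceConj_self hb0]
    exact Submodule.mul_mem_mul hx ⟨x, hx, rfl⟩
  refine le_antisymm (Submodule.mul_le.2 ?_) (sup_le hform ?_)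
  · rintro x hx _ ⟨y, hy, rfl⟩
    rw [LinearMap.restrictScalars_apply, mul_traceConj hb0, sub_eq_add_neg, ← neg_smul,
      Algebra.algebraMap_eq_smul_one]
    exact add_mem (Submodule.mem_sup_left ⟨_, hcoeff hx hy, rfl⟩)
      (Submodule.mem_sup_right ⟨_, neg_mem (wedgeC_mem_wedgeIdeal hx hy), rfl⟩)
  · rw [wedgeIdeal, Submodule.map_span, Submodule.span_le]
    rintro _ ⟨_, ⟨x, hx, y, hy, rfl⟩, rfl⟩
    have : wedgeC b x y • b 1 = algebraMap K A (Algebra.trace K A (b 1) * wedgeC b x y -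
        wedgeC b (b 1 * x) y) - x * traceConj K A y := by
      rw [mul_traceConj hb0, sub_sub_cancel]
    rw [LinearMap.restrictScalars_apply, LinearMap.toSpanSingleton_apply, this,
      Algebra.algebraMap_eq_smul_one]
    exact sub_mem (hform ⟨_, hcoeff hx hy, rfl⟩) (Submodule.mul_mem_mul hx ⟨y, hy, rfl⟩)

end QuadraticOrder

/-- Let `S = R ⊕ aξ` be an oriented quadratic algebra over a Dedekind
domain `R`, realized inside the two-dimensional `K`-algebra `A = S_K` with basis
`{1, ξ}`, and let `I` be a fractional ideal of `S` whose associated quadratic form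
`ω ↦ ω ∧ ξω` is primitive (its image is all of `a⁻¹·Λ²I`).  Then `I` is invertible:
there is a fractional ideal `J` with `IJ = S`. -/
theorem stmt6 (R : Type*) [CommRing R] [IsDedekindDomain R]
    (K : Type*) [Field K] [Algebra R K] [IsFractionRing R K]
    (A : Type*) [CommRing A] [Algebra K A] [Algebra R A] [IsScalarTower R K A]
    (b : Module.Basis (Fin 2) K A) (hb0 : b 0 = 1)
    (a : FractionalIdeal R⁰ K) (ha : a ≠ 0)
    (S : Subalgebra R A)
    (hS : Subalgebra.toSubmodule S =
      LinearMap.range (Algebra.linearMap R A) ⊔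
        Submodule.map ((LinearMap.toSpanSingleton K A (b 1)).restrictScalars R)
          (a : Submodule R K))
    (I : Submodule R A) (hfg : I.FG)
    (hstab : ∀ s ∈ S, ∀ x ∈ I, s * x ∈ I)
    (hspan : Submodule.span K (I : Set A) = ⊤)
    (hprim : formIdeal R b I = ((a⁻¹ : FractionalIdeal R⁰ K) : Submodule R K) *
      wedgeIdeal R b I) :
    ∃ J : Submodule R A, (∀ s ∈ S, ∀ x ∈ J, s * x ∈ J) ∧
      I * J = Subalgebra.toSubmodule S := by
  obtain ⟨N', hNN', hWN'⟩ := exists_formIdeal_mul_eq_one ha hfg hspan hprim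
  have ha' : ((a⁻¹ : FractionalIdeal R⁰ K) : Submodule R K) * a = 1 := by
    rw [← FractionalIdeal.coe_mul, inv_mul_cancel₀ ha, FractionalIdeal.coe_one]
  let ι (v : A) := (LinearMap.toSpanSingleton K A v).restrictScalars R
  let σI := I.map ((traceConj K A).restrictScalars R)
  refine ⟨N'.map (ι 1) * σI * Subalgebra.toSubmodule S,
    fun s hs x hx => S.mul_mem_of_mem_mul_toSubmodule _ hs hx, ?_⟩
  calc I * (N'.map (ι 1) * σI * Subalgebra.toSubmodule S)
      = I * σI * N'.map (ι 1) * Subalgebra.toSubmodule S := by ring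
    _ = ((formIdeal R b I * N').map (ι 1) ⊔ (wedgeIdeal R b I * N').map (ι (b 1))) *
          Subalgebra.toSubmodule S := by
      rw [mul_map_traceConj hb0 hS ha' hstab hprim, Submodule.sup_mul,
        Submodule.map_toSpanSingleton_mul_map_toSpanSingleton,
        Submodule.map_toSpanSingleton_mul_map_toSpanSingleton, mul_one, mul_one]
    _ = Subalgebra.toSubmodule S * Subalgebra.toSubmodule S := by
      rw [hNN', hWN', Submodule.map_toSpanSingleton_one_one, hS]
    _ = Subalgebra.toSubmodule S := S.isIdempotentElem_toSubmodule.eq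
end

section
/- Let S be a quadratic algebra over a Dedekind domain R, I an invertible fractional ideal of S and J any fractional ideal of S. Then End(IJ) = End(J). -/
open scoped nonZeroDivisors

theorem mul_mul_le_self_iff {α : Type*} [CommMonoid α] [PartialOrder α] [MulLeftMono α]
    {m i i' j : α} (h : i' * i * j = j) : m * (i * j) ≤ i * j ↔ m * j ≤ j := by
  constructor
  · intro hm
    calc m * j = m * (i' * i * j) := by rw [h]
      _ = i' * (m * (i * j)) := by ac_rfl
      _ ≤ i' * (i * j) := mul_le_mul_right hm i'
      _ = j := by rw [← mul_assoc, h]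
  · intro hm
    calc m * (i * j) = i * (m * j) := mul_left_comm m i j
      _ ≤ i * j := mul_le_mul_right hm i

namespace Submodule

variable {R A : Type*} [CommSemiring R] [Semiring A] [Algebra R A]

theorem span_singleton_mul_le_iff {x : A} {P Q : Submodule R A} :
    span R {x} * P ≤ Q ↔ ∀ y ∈ P, x * y ∈ Q := by
  simp [SetLike.le_def, mem_span_singleton_mul]

end Submodule

theorem Subalgebra.toSubmodule_mul_eq_self {R A : Type*} [CommSemiring R] [Semiring A]
    [Algebra R A] {S : Subalgebra R A} {J : Submodule R A}
    (hJ : ∀ s ∈ S, ∀ x ∈ J, s * x ∈ J) : Subalgebra.toSubmodule S * J = J :=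
  le_antisymm (Submodule.mul_le.mpr hJ)
    (le_mul_of_one_le_left' (Submodule.one_le.mpr S.one_mem))

theorem stmt12_general (R : Type*) [CommRing R]
    (A : Type*) [CommRing A] [Algebra R A]
    (S : Subalgebra R A)
    (I J : Submodule R A)
    (hJstab : ∀ s ∈ S, ∀ x ∈ J, s * x ∈ J)
    (hinv : ∃ I', (∀ s ∈ S, ∀ x ∈ I', s * x ∈ I') ∧
      I * I' = Subalgebra.toSubmodule S) :
    ∀ x : A, (∀ y ∈ I * J, x * y ∈ I * J) ↔ (∀ y ∈ J, x * y ∈ J) := by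
  obtain ⟨I', -, hII'⟩ := hinv
  have hJ : I' * I * J = J := by
    rw [mul_comm I', hII', Subalgebra.toSubmodule_mul_eq_self hJstab]
  intro x
  simpa only [Submodule.span_singleton_mul_le_iff] using
    mul_mul_le_self_iff (m := Submodule.span R {x}) hJ

/-- Let `S` be a quadratic algebra over a Dedekind domain `R` with total
quotient ring `S_K = A`, `I` an invertible fractional ideal of `S` and `J` any fractional
ideal of `S`.  Then `End(IJ) = End(J)`, where `End(I) = {x ∈ S_K : xI ⊆ I}`. -/
theorem stmt12 (R : Type*) [CommRing R] [IsDedekindDomain R]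
    (K : Type*) [Field K] [Algebra R K] [IsFractionRing R K]
    (A : Type*) [CommRing A] [Algebra K A] [Algebra R A] [IsScalarTower R K A]
    (b : Module.Basis (Fin 2) K A) (hb0 : b 0 = 1)
    (a : FractionalIdeal R⁰ K) (ha : a ≠ 0)
    (S : Subalgebra R A)
    (hS : Subalgebra.toSubmodule S =
      LinearMap.range (Algebra.linearMap R A) ⊔
        Submodule.map ((LinearMap.toSpanSingleton K A (b 1)).restrictScalars R)
          (a : Submodule R K))
    (I J : Submodule R A) (hIfg : I.FG) (hJfg : J.FG)
    (hIstab : ∀ s ∈ S, ∀ x ∈ I, s * x ∈ I)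
    (hJstab : ∀ s ∈ S, ∀ x ∈ J, s * x ∈ J)
    (hIspan : Submodule.span K (I : Set A) = ⊤)
    (hJspan : Submodule.span K (J : Set A) = ⊤)
    (hinv : ∃ I', (∀ s ∈ S, ∀ x ∈ I', s * x ∈ I') ∧
      I * I' = Subalgebra.toSubmodule S) :
    ∀ x : A, (∀ y ∈ I * J, x * y ∈ I * J) ↔ (∀ y ∈ J, x * y ∈ J) :=
  stmt12_general R A S I J hJstab hinv
end

section
/- If two balanced triples (I₁,I₂,I₃) and (γ₁I₁, I₂, I₃) of fractional ideals of an oriented quadratic algebra S over a Dedekind domain R give rise to the same trilinear map β(x,y,z) = α(1 ∧ xyz), then γ₁ = 1. -/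
/-!
Since the products `xyz` with `x ∈ I₁, y ∈ I₂, z ∈ I₃` span `S_K` over `K`, equality of the two
trilinear maps says that the `K`-linear functional `w ↦ α(1 ∧ (γ₁ - 1) w)` vanishes on all of
`S_K`. Taking `w = 1` puts `γ₁ - 1` in `K`, and then `w = ξ` forces `γ₁ - 1 = 0`.
-/

open scoped nonZeroDivisors

open Pointwise

section

variable {K A : Type*} [Field K] [CommRing A] [Algebra K A]

theorem Submodule.span_mul_eq_top {s t : Set A} (hs : Submodule.span K s = ⊤)
    (ht : Submodule.span K t = ⊤) : Submodule.span K (s * t) = ⊤ := by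
  rw [← Submodule.span_mul_span, hs, ht]
  exact top_unique ((one_mul ⊤).symm.le.trans (mul_le_mul_left le_top ⊤))

variable {b : Module.Basis (Fin 2) K A}

theorem wedgeC_one_left (hb0 : b 0 = 1) (w : A) : wedgeC b 1 w = b.coord 1 w := by
  simp [wedgeC, ← hb0]

theorem eq_zero_of_forall_coord_one_mul_eq_zero (hb0 : b 0 = 1) {δ : A}
    (hδ : ∀ w, b.coord 1 (δ * w) = 0) : δ = 0 := by
  have hδ1 : b.repr δ 1 = 0 := by simpa using hδ 1
  have hδ_smul : δ = b.repr δ 0 • 1 := by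
    conv_lhs => rw [← b.sum_repr δ]
    rw [Fin.sum_univ_two, hδ1, zero_smul, add_zero, hb0]
  have hδ0 : b.repr δ 0 = 0 := by
    simpa [smul_mul_assoc] using (hδ_smul ▸ hδ (b 1) :)
  rw [hδ_smul, hδ0, zero_smul]

end

theorem stmt13_general (R : Type*) [CommRing R]
    (K : Type*) [Field K]
    (A : Type*) [CommRing A] [Algebra K A] [Algebra R A]
    (b : Module.Basis (Fin 2) K A) (hb0 : b 0 = 1)
    (I₁ I₂ I₃ : Submodule R A)
    (hspan : Submodule.span K (I₁ : Set A) = ⊤ ∧ Submodule.span K (I₂ : Set A) = ⊤ ∧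
      Submodule.span K (I₃ : Set A) = ⊤)
    (γ : A)
    (hβ : ∀ x ∈ I₁, ∀ y ∈ I₂, ∀ z ∈ I₃,
      wedgeC b 1 (γ * x * y * z) = wedgeC b 1 (x * y * z)) :
    γ = 1 := by
  obtain ⟨h₁, h₂, h₃⟩ := hspan
  have hprod : Submodule.span K ((I₁ : Set A) * (I₂ : Set A) * (I₃ : Set A)) = ⊤ :=
    Submodule.span_mul_eq_top (Submodule.span_mul_eq_top h₁ h₂) h₃
  have hf : (b.coord 1).comp (LinearMap.mulLeft K (γ - 1)) = 0 := by
    refine LinearMap.ext_on hprod ?_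
    rintro _ ⟨_, ⟨x, hx, y, hy, rfl⟩, z, hz, rfl⟩
    have h := hβ x hx y hy z hz
    rw [wedgeC_one_left hb0, wedgeC_one_left hb0] at h
    change b.coord 1 ((γ - 1) * (x * y * z)) = 0
    rw [sub_mul, one_mul, map_sub, ← mul_assoc, ← mul_assoc, h, sub_self]
  exact sub_eq_zero.1 <| eq_zero_of_forall_coord_one_mul_eq_zero hb0 fun w =>
    LinearMap.congr_fun hf w

/-- If two balanced triples `(I₁, I₂, I₃)` and `(γ₁I₁, I₂, I₃)` of
fractional ideals of an oriented quadratic algebra `S` over a Dedekind domain `R` give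
rise to the same trilinear map `β(x, y, z) = α(1 ∧ xyz)`, then `γ₁ = 1`. -/
theorem stmt13 (R : Type*) [CommRing R] [IsDedekindDomain R]
    (K : Type*) [Field K] [Algebra R K] [IsFractionRing R K]
    (A : Type*) [CommRing A] [Algebra K A] [Algebra R A] [IsScalarTower R K A]
    (b : Module.Basis (Fin 2) K A) (hb0 : b 0 = 1)
    (a : FractionalIdeal R⁰ K) (ha : a ≠ 0)
    (S : Subalgebra R A)
    (hS : Subalgebra.toSubmodule S =
      LinearMap.range (Algebra.linearMap R A) ⊔
        Submodule.map ((LinearMap.toSpanSingleton K A (b 1)).restrictScalars R)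
          (a : Submodule R K))
    (I₁ I₂ I₃ : Submodule R A)
    (hfg : I₁.FG ∧ I₂.FG ∧ I₃.FG)
    (hstab : (∀ s ∈ S, ∀ x ∈ I₁, s * x ∈ I₁) ∧ (∀ s ∈ S, ∀ x ∈ I₂, s * x ∈ I₂) ∧
      (∀ s ∈ S, ∀ x ∈ I₃, s * x ∈ I₃))
    (hspan : Submodule.span K (I₁ : Set A) = ⊤ ∧ Submodule.span K (I₂ : Set A) = ⊤ ∧
      Submodule.span K (I₃ : Set A) = ⊤)
    (hbal : I₁ * I₂ * I₃ ≤ Subalgebra.toSubmodule S ∧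
      wedgeIdeal R b I₁ * wedgeIdeal R b I₂ * wedgeIdeal R b I₃ =
        (a : Submodule R K) * (a : Submodule R K) * (a : Submodule R K))
    (γ : A) (hγ : IsUnit γ)
    (hbal' : Submodule.map (LinearMap.mulLeft R γ) I₁ * I₂ * I₃ ≤
        Subalgebra.toSubmodule S ∧
      wedgeIdeal R b (Submodule.map (LinearMap.mulLeft R γ) I₁) * wedgeIdeal R b I₂ *
          wedgeIdeal R b I₃ =
        (a : Submodule R K) * (a : Submodule R K) * (a : Submodule R K))
    (hβ : ∀ x ∈ I₁, ∀ y ∈ I₂, ∀ z ∈ I₃,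
      wedgeC b 1 (γ * x * y * z) = wedgeC b 1 (x * y * z)) :
    γ = 1 :=
  stmt13_general R K A b hb0 I₁ I₂ I₃ hspan γ hβ
end

section
/- Let p ≥ 3 be prime, u ∈ Z_p^× a non-square mod p, Sₙ = Z_p[pⁿ√u] ⊆ Z_p[√u]. Then every fractional ideal of Sₙ is, up to scaling by an element of Q_p(√u)^×, equal to one of the subrings S₀, S₁, …, Sₙ; in particular the Picard group of Sₙ is trivial. -/
/-!
Write elements of `L` as `a + b ρ` with `a, b ∈ ℚ_p`. Among finitely many generators of `I`, take
one, `γ`, having a coordinate `z` of maximal `p`-adic norm. Then `z⁻¹ I ⊆ S₀`, and `z⁻¹ γ = a + b ρ`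
has a unit coordinate; as `u` is not a square mod `p`, the norm `a² - u b²` is a unit of `ℤ_p`, so
`z⁻¹ γ` is a unit of `S₀`. Hence `J = γ⁻¹ I` contains `1`, is `Sₙ`-stable and lies in `S₀`, i.e.
`Sₙ ⊆ J ⊆ S₀`. Such a `J` is `ℤ_p + T ρ` for the ideal `T = {b | b ρ ∈ J} ∋ pⁿ`, and `T = (pⁱ)` with
`i ≤ n`, so `J = Sᵢ`. Finally, if `I = γ Sᵢ` and `I K = Sₙ`, then `Sᵢ` stabilises `I K = Sₙ ∋ 1`,
so `Sᵢ ⊆ Sₙ`.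
-/

open Submodule

lemma le_of_mul_le_of_one_mem {R A : Type*} [CommSemiring R] [Semiring A] [Algebra R A]
    {M N : Submodule R A} (hM : M * N ≤ N) (hN : (1 : A) ∈ N) : M ≤ N :=
  calc M = M * 1 := (Submodule.mul_one M).symm
    _ ≤ M * N := mul_le_mul_right (one_le.2 hN) M
    _ ≤ N := hM

lemma isUnit_mul_self_sub_mul_mul_self {R F : Type*} [CommRing R] [IsLocalRing R] [Field F]
    (f : R →+* F) (hf : RingHom.ker f = IsLocalRing.maximalIdeal R) {u : R}
    (hu : ¬ IsSquare (f u)) {a b : R} (hab : IsUnit a ∨ IsUnit b) :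
    IsUnit (a * a - u * (b * b)) := by
  have unit_iff : ∀ x : R, IsUnit x ↔ f x ≠ 0 := fun x => by
    rw [ne_eq, ← RingHom.mem_ker, hf, IsLocalRing.mem_maximalIdeal, mem_nonunits_iff, not_not]
  simp only [unit_iff, map_sub, map_mul, ne_eq, sub_eq_zero] at hab ⊢
  intro h
  rcases eq_or_ne (f b) 0 with hb | hb
  · rw [hb, mul_zero, mul_zero, mul_self_eq_zero] at h
    exact hab.elim (· h) (· hb)
  · exact hu ⟨f a / f b, by rw [div_mul_div_comm, eq_div_iff (mul_ne_zero hb hb), h]⟩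

section QuadOrder

variable {R L : Type*} [CommRing R] [CommRing L] [Algebra R L]

lemma mem_span_one_pair_iff {x y : L} :
    x ∈ span R {1, y} ↔ ∃ a b : R, algebraMap R L a + algebraMap R L b * y = x := by
  simp only [mem_span_pair, Algebra.smul_def, mul_one]

lemma span_one_pair_mul_le {x : L} (hx : x * x ∈ span R {1, x}) :
    span R {1, x} * span R {1, x} ≤ span R {1, x} := by
  rw [span_mul_span, span_le]
  rintro _ ⟨a, ha, b, hb, rfl⟩
  rcases ha with rfl | rfl <;> rcases hb with rfl | rfl <;>
    simp only [one_mul, mul_one, SetLike.mem_coe] <;>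
    first | exact hx | exact subset_span (by simp)

lemma mul_map_mulLeft_le {M N : Submodule R L} (h : M * N ≤ N) (γ : L) :
    M * map (LinearMap.mulLeft R γ) N ≤ map (LinearMap.mulLeft R γ) N := by
  refine mul_le.2 fun m hm _ ⟨x, hx, hγx⟩ => ⟨m * x, mul_le.1 h m hm x hx, ?_⟩
  rw [← hγx, LinearMap.mulLeft_apply, LinearMap.mulLeft_apply, mul_left_comm]

lemma exists_mul_eq_one_of_isUnit {ρ : L} {u : R} (hρ : ρ * ρ = algebraMap R L u) {a b : R}
    (h : IsUnit (a * a - u * (b * b))) :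
    ∃ y ∈ span R {1, ρ}, (algebraMap R L a + algebraMap R L b * ρ) * y = 1 := by
  obtain ⟨d, hd⟩ := h.exists_right_inv
  -- `(a + b ρ)⁻¹ = (a - b ρ) / (a² - u b²)`
  refine ⟨algebraMap R L (a * d) + algebraMap R L (-(b * d)) * ρ,
    mem_span_one_pair_iff.2 ⟨_, _, rfl⟩, ?_⟩
  have hd' := congrArg (algebraMap R L) hd
  simp only [map_mul, map_sub, map_neg, map_one] at hd' ⊢
  linear_combination hd' - algebraMap R L b * algebraMap R L b * algebraMap R L d * hρ

/-- The paper's `Sᵢ = R + ϖⁱ ρ R`. -/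
def quadOrder (ϖ : R) (ρ : L) (i : ℕ) : Submodule R L :=
  span R {1, algebraMap R L ϖ ^ i * ρ}

variable {ϖ : R} {ρ : L}

lemma quadOrder_zero : quadOrder ϖ ρ 0 = span R {1, ρ} := by
  simp [quadOrder]

lemma one_mem_quadOrder (i : ℕ) : (1 : L) ∈ quadOrder ϖ ρ i :=
  subset_span (Set.mem_insert _ _)

lemma quadOrder_antitone : Antitone (quadOrder ϖ ρ) := by
  intro i j hij
  refine span_le.2 ?_
  rintro _ (rfl | rfl)
  · exact one_mem_quadOrder i
  · rw [← Nat.sub_add_cancel hij, pow_add, mul_assoc]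
    exact mem_span_one_pair_iff.2 ⟨0, ϖ ^ (j - i), by simp⟩

lemma quadOrder_mul_le {u : R} (hρ : ρ * ρ = algebraMap R L u) (i : ℕ) :
    quadOrder ϖ ρ i * quadOrder ϖ ρ i ≤ quadOrder ϖ ρ i := by
  refine span_one_pair_mul_le (mem_span_one_pair_iff.2 ⟨ϖ ^ i * ϖ ^ i * u, 0, ?_⟩)
  simp only [map_mul, map_pow, map_zero, zero_mul, add_zero]
  linear_combination -(algebraMap R L ϖ ^ i * algebraMap R L ϖ ^ i) * hρ

lemma exists_eq_quadOrder_of_le_of_le [IsDomain R] [IsDiscreteValuationRing R] (hϖ : Irreducible ϖ)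
    {n : ℕ} {J : Submodule R L} (hn : quadOrder ϖ ρ n ≤ J) (h0 : J ≤ quadOrder ϖ ρ 0) :
    ∃ i ≤ n, J = quadOrder ϖ ρ i := by
  set T : Ideal R := comap (LinearMap.toSpanSingleton R L ρ) J
  have mem_T : ∀ b, b ∈ T ↔ algebraMap R L b * ρ ∈ J := fun b => by
    simp [T, Algebra.smul_def]
  have hone : (1 : L) ∈ J := hn (one_mem_quadOrder n)
  have hϖn : ϖ ^ n ∈ T :=
    (mem_T _).2 (by rw [map_pow]; exact hn (subset_span (Set.mem_insert_of_mem _ rfl)))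
  obtain ⟨i, hi⟩ := IsDiscreteValuationRing.ideal_eq_span_pow_irreducible
    ((Submodule.ne_bot_iff T).2 ⟨_, hϖn, pow_ne_zero n hϖ.ne_zero⟩) hϖ
  have hin : i ≤ n := by
    rw [hi, Ideal.mem_span_singleton] at hϖn
    exact (pow_dvd_pow_iff hϖ.ne_zero hϖ.not_isUnit).1 hϖn
  refine ⟨i, hin, le_antisymm (fun x hx => ?_) (span_le.2 ?_)⟩
  · rw [quadOrder_zero] at h0
    obtain ⟨a, b, rfl⟩ := mem_span_one_pair_iff.1 (h0 hx)
    have hb : b ∈ T := (mem_T b).2 <| by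
      convert sub_mem hx (J.smul_mem a hone) using 1
      rw [Algebra.smul_def, mul_one, add_sub_cancel_left]
    rw [hi, Ideal.mem_span_singleton] at hb
    obtain ⟨c, rfl⟩ := hb
    exact mem_span_one_pair_iff.2 ⟨a, c, by rw [map_mul, map_pow]; ring⟩
  · rintro _ (rfl | rfl)
    · exact hone
    · rw [← map_pow]
      exact (mem_T _).1 (hi ▸ Ideal.mem_span_singleton_self _)

end QuadOrder

section Padic

variable {p : ℕ} [Fact p.Prime] {L : Type*} [CommRing L] [Algebra ℚ_[p] L] [Algebra ℤ_[p] L]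
  [IsScalarTower ℤ_[p] ℚ_[p] L] {ρ : L} {bL : Module.Basis (Fin 2) ℚ_[p] L}

lemma mem_span_one_iff_norm_repr_le_one (hb0 : bL 0 = 1) (hb1 : bL 1 = ρ) {x : L} :
    x ∈ span ℤ_[p] {1, ρ} ↔ ∀ j, ‖bL.repr x j‖ ≤ 1 := by
  have hrange : ({1, ρ} : Set L) = Set.range bL := by
    ext x
    simp [Fin.exists_fin_two, hb0, hb1, eq_comm]
  rw [hrange, bL.mem_span_iff_repr_mem ℤ_[p]]
  refine forall_congr' fun j => ⟨?_, fun h => ⟨⟨_, h⟩, rfl⟩⟩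
  rintro ⟨a, ha⟩
  rw [← ha]
  exact a.norm_le_one

lemma repr_algebraMap_add_algebraMap_mul (hb0 : bL 0 = 1) (hb1 : bL 1 = ρ) (a b : ℤ_[p]) :
    ⇑(bL.repr (algebraMap ℤ_[p] L a + algebraMap ℤ_[p] L b * ρ)) = ![(a : ℚ_[p]), b] := by
  convert bL.repr_sum_self ![(a : ℚ_[p]), b]
  simp [Fin.sum_univ_two, hb0, hb1, Algebra.smul_def, IsScalarTower.algebraMap_apply ℤ_[p] ℚ_[p] L]

lemma exists_mul_eq_one_of_norm_repr_eq_one (hb0 : bL 0 = 1) (hb1 : bL 1 = ρ) {u : ℤ_[p]}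
    (hρ : ρ * ρ = algebraMap ℤ_[p] L u) (hu : ¬ IsSquare (PadicInt.toZMod u)) {x : L}
    (hx : x ∈ span ℤ_[p] {1, ρ}) {j : Fin 2} (hj : ‖bL.repr x j‖ = 1) :
    ∃ y ∈ span ℤ_[p] {1, ρ}, x * y = 1 := by
  obtain ⟨a, b, rfl⟩ := mem_span_one_pair_iff.1 hx
  have hab : IsUnit a ∨ IsUnit b := by
    rw [repr_algebraMap_add_algebraMap_mul hb0 hb1] at hj
    simp only [PadicInt.isUnit_iff, PadicInt.norm_def]
    fin_cases j
    exacts [Or.inl hj, Or.inr hj]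
  exact exists_mul_eq_one_of_isUnit hρ
    (isUnit_mul_self_sub_mul_mul_self _ PadicInt.ker_toZMod hu hab)

lemma exists_mem_mul_eq_one_and_mul_mem_span (hb0 : bL 0 = 1) (hb1 : bL 1 = ρ) {u : ℤ_[p]}
    (hρ : ρ * ρ = algebraMap ℤ_[p] L u) (hu : ¬ IsSquare (PadicInt.toZMod u)) {s : Finset L}
    (hs : ∃ x ∈ s, x ≠ 0) :
    ∃ γ ∈ s, ∃ δ : L, γ * δ = 1 ∧ ∀ x ∈ s, δ * x ∈ span ℤ_[p] {1, ρ} := by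
  obtain ⟨x₀, hx₀, hx₀0⟩ := hs
  obtain ⟨k, hk⟩ : ∃ k, bL.repr x₀ k ≠ 0 := by
    by_contra! h
    exact hx₀0 (bL.repr.map_eq_zero_iff.1 (Finsupp.ext h))
  obtain ⟨⟨γ, j⟩, hγj, hmax⟩ := (s ×ˢ Finset.univ).exists_max_image
    (fun xk : L × Fin 2 => ‖bL.repr xk.1 xk.2‖) ⟨(x₀, k), by simp [hx₀]⟩
  have hγ : γ ∈ s := (Finset.mem_product.1 hγj).1
  set z := bL.repr γ j
  have hz : z ≠ 0 := by
    intro hz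
    have := hmax (x₀, k) (by simp [hx₀])
    simp only [z, hz, norm_zero, norm_le_zero_iff] at this
    exact hk this
  have hmem : ∀ x ∈ s, z⁻¹ • x ∈ span ℤ_[p] {1, ρ} := fun x hx =>
    (mem_span_one_iff_norm_repr_le_one hb0 hb1).2 fun k => by
      rw [map_smul, Finsupp.smul_apply, smul_eq_mul, norm_mul, norm_inv,
        inv_mul_le_one₀ (norm_pos_iff.2 hz)]
      exact hmax (x, k) (by simp [hx])
  obtain ⟨y, hy, hγy⟩ := exists_mul_eq_one_of_norm_repr_eq_one hb0 hb1 hρ hu (hmem γ hγ) (j := j)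
    (by rw [map_smul, Finsupp.smul_apply, smul_eq_mul, inv_mul_cancel₀ hz, norm_one])
  refine ⟨γ, hγ, z⁻¹ • y, by rwa [mul_smul_comm, ← smul_mul_assoc], fun x hx => ?_⟩
  rw [smul_mul_assoc, ← mul_smul_comm]
  exact span_one_pair_mul_le (mem_span_one_pair_iff.2 ⟨u, 0, by simp [hρ]⟩)
    (mul_mem_mul hy (hmem x hx))

lemma exists_isUnit_eq_map_mulLeft_quadOrder (hb0 : bL 0 = 1) (hb1 : bL 1 = ρ) {u : ℤ_[p]}
    (hρ : ρ * ρ = algebraMap ℤ_[p] L u) (hu : ¬ IsSquare (PadicInt.toZMod u)) {n : ℕ}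
    {I : Submodule ℤ_[p] L} (hI : I.FG) (hI0 : I ≠ ⊥) (hstab : quadOrder (p : ℤ_[p]) ρ n * I ≤ I) :
    ∃ γ : L, IsUnit γ ∧
      ∃ i ≤ n, I = map (LinearMap.mulLeft ℤ_[p] γ) (quadOrder (p : ℤ_[p]) ρ i) := by
  obtain ⟨s, rfl⟩ := hI
  obtain ⟨γ, hγ, δ, hγδ, hδ⟩ := exists_mem_mul_eq_one_and_mul_mem_span hb0 hb1 hρ hu (s := s) <| by
    by_contra! h
    exact hI0 (span_eq_bot.2 h)
  set J := map (LinearMap.mulLeft ℤ_[p] δ) (span ℤ_[p] (s : Set L))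
  have hJ1 : (1 : L) ∈ J := ⟨γ, subset_span hγ, by rw [LinearMap.mulLeft_apply, mul_comm, hγδ]⟩
  have hnJ : quadOrder (p : ℤ_[p]) ρ n ≤ J :=
    le_of_mul_le_of_one_mem (mul_map_mulLeft_le hstab δ) hJ1
  have hJ0 : J ≤ quadOrder (p : ℤ_[p]) ρ 0 := by
    rw [quadOrder_zero, map_le_iff_le_comap, span_le]
    exact hδ
  obtain ⟨i, hin, hJi⟩ := exists_eq_quadOrder_of_le_of_le PadicInt.irreducible_p hnJ hJ0
  refine ⟨γ, IsUnit.of_mul_eq_one δ hγδ, i, hin, ?_⟩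
  rw [← hJi, ← map_comp, ← LinearMap.mulLeft_mul, hγδ, LinearMap.mulLeft_one, map_id]

end Padic

theorem stmt14_general (p : ℕ) [Fact p.Prime]
    (u : ℤ_[p])
    (hnsq : ¬ ∃ z : ZMod p, z * z = PadicInt.toZMod u)
    (L : Type*) [CommRing L] [Algebra ℚ_[p] L] [Algebra ℤ_[p] L]
    [IsScalarTower ℤ_[p] ℚ_[p] L]
    (ρ : L) (bL : Module.Basis (Fin 2) ℚ_[p] L) (hb0 : bL 0 = 1) (hb1 : bL 1 = ρ)
    (hρ : ρ * ρ = algebraMap ℚ_[p] L (u : ℚ_[p]))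
    (n : ℕ)
    (Sm : ℕ → Submodule ℤ_[p] L)
    (hSm : ∀ i, Sm i = Submodule.span ℤ_[p] ({1, (p : L) ^ i * ρ} : Set L)) :
    ∀ I : Submodule ℤ_[p] L, I.FG → (∀ s ∈ Sm n, ∀ x ∈ I, s * x ∈ I) →
      Submodule.span ℚ_[p] (I : Set L) = ⊤ →
      ((∃ γ : L, IsUnit γ ∧ ∃ i ≤ n,
          I = Submodule.map (LinearMap.mulLeft ℤ_[p] γ) (Sm i)) ∧
       ((∃ J : Submodule ℤ_[p] L, (∀ s ∈ Sm n, ∀ x ∈ J, s * x ∈ J) ∧ I * J = Sm n) →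
          ∃ γ : L, IsUnit γ ∧ I = Submodule.map (LinearMap.mulLeft ℤ_[p] γ) (Sm n))) := by
  obtain rfl : Sm = quadOrder (p : ℤ_[p]) ρ := funext fun i => by rw [hSm, quadOrder, map_natCast]
  have hρ' : ρ * ρ = algebraMap ℤ_[p] L u := by
    rw [hρ, IsScalarTower.algebraMap_apply ℤ_[p] ℚ_[p] L]
    rfl
  have hu : ¬ IsSquare (PadicInt.toZMod u) := fun ⟨z, hz⟩ => hnsq ⟨z, hz.symm⟩
  intro I hI hstab hspan
  have hI0 : I ≠ ⊥ := by
    rintro rfl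
    have : Nontrivial L := nontrivial_of_ne (bL 0) 0 (bL.ne_zero 0)
    simp at hspan
  obtain ⟨γ, hγ, i, hin, rfl⟩ :=
    exists_isUnit_eq_map_mulLeft_quadOrder hb0 hb1 hρ' hu hI hI0 (mul_le.2 hstab)
  refine ⟨⟨γ, hγ, i, hin, rfl⟩, fun ⟨K, _, hIK⟩ => ⟨γ, hγ, ?_⟩⟩
  suffices quadOrder (p : ℤ_[p]) ρ i ≤ quadOrder (p : ℤ_[p]) ρ n by
    rw [le_antisymm this (quadOrder_antitone hin)]
  rw [← hIK]
  refine le_of_mul_le_of_one_mem ?_ (hIK ▸ one_mem_quadOrder n)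
  rw [← mul_assoc]
  exact mul_le_mul_left (mul_map_mulLeft_le (quadOrder_mul_le hρ' i) γ) K

/-- Let `p ≥ 3` be prime, `u ∈ ℤ_p^×` a non-square mod `p`, and
`Sₙ = ℤ_p[pⁿ√u] ⊆ ℤ_p[√u]` inside `L = ℚ_p(√u)` (presented as the `ℚ_p`-algebra with
basis `{1, √u}` and `(√u)² = u`).  Then every fractional ideal of `Sₙ` is, up to scaling
by an element of `L^×`, one of the subrings `S₀, S₁, …, Sₙ`; in particular every
invertible fractional ideal is a scaling of `Sₙ`, so `Pic Sₙ` is trivial. -/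
theorem stmt14 (p : ℕ) [Fact p.Prime] (hp : 3 ≤ p)
    (u : ℤ_[p]) (hu : IsUnit u)
    (hnsq : ¬ ∃ z : ZMod p, z * z = PadicInt.toZMod u)
    (L : Type*) [CommRing L] [Algebra ℚ_[p] L] [Algebra ℤ_[p] L]
    [IsScalarTower ℤ_[p] ℚ_[p] L]
    (ρ : L) (bL : Module.Basis (Fin 2) ℚ_[p] L) (hb0 : bL 0 = 1) (hb1 : bL 1 = ρ)
    (hρ : ρ * ρ = algebraMap ℚ_[p] L (u : ℚ_[p]))
    (n : ℕ)
    (Sm : ℕ → Submodule ℤ_[p] L)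
    (hSm : ∀ i, Sm i = Submodule.span ℤ_[p] ({1, (p : L) ^ i * ρ} : Set L)) :
    ∀ I : Submodule ℤ_[p] L, I.FG → (∀ s ∈ Sm n, ∀ x ∈ I, s * x ∈ I) →
      Submodule.span ℚ_[p] (I : Set L) = ⊤ →
      ((∃ γ : L, IsUnit γ ∧ ∃ i ≤ n,
          I = Submodule.map (LinearMap.mulLeft ℤ_[p] γ) (Sm i)) ∧
       ((∃ J : Submodule ℤ_[p] L, (∀ s ∈ Sm n, ∀ x ∈ J, s * x ∈ J) ∧ I * J = Sm n) →
          ∃ γ : L, IsUnit γ ∧ I = Submodule.map (LinearMap.mulLeft ℤ_[p] γ) (Sm n))) :=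
  stmt14_general p u hnsq L ρ bL hb0 hb1 hρ n Sm hSm
end

section
/- With Sᵢ = Z_p + pⁱ√u·Z_p ideals of Sₙ (0 ≤ i ≤ j ≤ k ≤ n, p odd, u a non-square unit), there exists γ ∈ Q_p(√u)^× with γ·SᵢSⱼSₖ ⊆ Sₙ and v_p(N(γ)) = 3n − i − j − k if and only if i + j + k ≡ n (mod 2) and (n−j) + (n−k) ≥ n − i. -/
/-!
Write `γ = a + b√u`. Since `u` is not a square mod `p`, the norm form satisfies
`‖a² - u b²‖ = max ‖a‖ ‖b‖ ^ 2`, so `v(N γ) = 2 min (v a) (v b)` is even. If `γ Sᵢ Sⱼ Sₖ ⊆ Sₙ`,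
testing on `1` and `pⁱ√u` gives `v b ≥ n` and `v a ≥ n - i`, hence `v(N γ) ≥ 2 (n - i)`.
Conversely `γ = pᵗ` with `2t = 3n - i - j - k` works: `Sᵢ Sⱼ Sₖ ⊆ Sᵢ` and `pᵗ Sᵢ ⊆ Sₙ` once
`t ≥ n - i`.
-/

namespace PadicInt

variable {p : ℕ} [Fact p.Prime]

theorem norm_mul_self_sub_eq_one {u : ℤ_[p]} (hu : ¬∃ z : ZMod p, z * z = toZMod u)
    (c : ℤ_[p]) : ‖c * c - u‖ = 1 := by
  rw [← isUnit_iff]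
  by_contra h
  have hker : c * c - u ∈ RingHom.ker toZMod := by
    rwa [ker_toZMod, IsLocalRing.mem_maximalIdeal]
  rw [RingHom.mem_ker, map_sub, map_mul, sub_eq_zero] at hker
  exact hu ⟨_, hker⟩

end PadicInt

namespace Padic

variable {p : ℕ} [Fact p.Prime]

theorem norm_le_norm_iff_valuation_le {x y : ℚ_[p]} (hx : x ≠ 0) (hy : y ≠ 0) :
    ‖x‖ ≤ ‖y‖ ↔ y.valuation ≤ x.valuation := by
  rw [norm_eq_zpow_neg_valuation hx, norm_eq_zpow_neg_valuation hy,
    zpow_le_zpow_iff_right₀ (by exact_mod_cast (Fact.out : p.Prime).one_lt), neg_le_neg_iff]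

theorem valuation_eq_of_norm_eq {x y : ℚ_[p]} (hx : x ≠ 0) (hy : y ≠ 0) (h : ‖x‖ = ‖y‖) :
    x.valuation = y.valuation :=
  le_antisymm ((norm_le_norm_iff_valuation_le hy hx).1 h.ge)
    ((norm_le_norm_iff_valuation_le hx hy).1 h.le)

theorem norm_sq_sub_mul_sq {u : ℤ_[p]} (hu : ¬∃ z : ZMod p, z * z = PadicInt.toZMod u)
    (a b : ℚ_[p]) : ‖a ^ 2 - u * b ^ 2‖ = max ‖a‖ ‖b‖ ^ 2 := by
  have hu1 : ‖(u : ℚ_[p])‖ = 1 := by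
    simpa using PadicInt.norm_mul_self_sub_eq_one hu 0
  rcases eq_or_ne ‖a‖ ‖b‖ with hab | hab
  · rcases eq_or_ne b 0 with rfl | hb
    · simp_all
    -- `c = a / b` lies in `ℤ_p`, and `a² - u b² = b² (c² - u)` with `c² - u` a unit
    let c : ℤ_[p] := ⟨a / b, by rw [norm_div, hab, div_self (norm_ne_zero_iff.2 hb)]⟩
    have hfactor : a ^ 2 - u * b ^ 2 = b ^ 2 * ((c * c - u : ℤ_[p]) : ℚ_[p]) := by
      have hc : (c : ℚ_[p]) = a / b := rfl
      rw [PadicInt.coe_sub, PadicInt.coe_mul, hc]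
      field_simp
    rw [hfactor, norm_mul, PadicInt.padic_norm_e_of_padicInt,
      PadicInt.norm_mul_self_sub_eq_one hu, hab, max_self, norm_pow, mul_one]
  · have hne : ‖a ^ 2‖ ≠ ‖-(u * b ^ 2)‖ := by
      rw [norm_neg, norm_mul, hu1, one_mul, norm_pow, norm_pow]
      exact fun h => hab ((pow_left_inj₀ (norm_nonneg _) (norm_nonneg _) two_ne_zero).1 h)
    rw [sub_eq_add_neg, add_eq_max_of_ne hne, norm_neg, norm_mul, hu1, one_mul, norm_pow,
      norm_pow]
    rcases le_total ‖a‖ ‖b‖ with h | h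
    · rw [max_eq_right h, max_eq_right (pow_le_pow_left₀ (norm_nonneg _) h 2)]
    · rw [max_eq_left h, max_eq_left (pow_le_pow_left₀ (norm_nonneg _) h 2)]

theorem valuation_norm_natCast_pow {L : Type*} [Ring L] [Algebra ℚ_[p] L] (t : ℕ) :
    (Algebra.norm ℚ_[p] ((p : L) ^ t)).valuation = Module.finrank ℚ_[p] L * t := by
  rw [map_pow, Algebra.norm_natCast, valuation_pow, valuation_pow, valuation_p, mul_one,
    mul_comm]

theorem natCast_pow_ne_zero {L : Type*} [Ring L] [Algebra ℚ_[p] L] [Nontrivial L] (t : ℕ) :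
    (p : L) ^ t ≠ 0 := by
  rw [← map_natCast (algebraMap ℚ_[p] L), ← map_pow]
  exact (map_ne_zero _).2 (pow_ne_zero t (Nat.cast_ne_zero.2 (Fact.out : p.Prime).ne_zero))

end Padic

namespace Module.Basis

variable {K L : Type*} [CommRing K] [CommRing L] [Algebra K L] {d : K}
  (b : Basis (Fin 2) K L) (hb0 : b 0 = 1)
include hb0

theorem eq_repr_smul_one_add (x : L) : x = b.repr x 0 • 1 + b.repr x 1 • b 1 := by
  conv_lhs => rw [← b.sum_repr x]
  rw [Fin.sum_univ_two, hb0]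

variable {b} (hd : b 1 * b 1 = algebraMap K L d)
include hd

theorem mul_basis_one (x : L) : x * b 1 = (d * b.repr x 1) • 1 + b.repr x 0 • b 1 := by
  conv_lhs => rw [b.eq_repr_smul_one_add hb0 x]
  rw [add_mul, smul_mul_assoc, smul_mul_assoc, hd, one_mul,
    Algebra.algebraMap_eq_smul_one, add_comm, mul_comm d, mul_smul]

theorem repr_mul_basis_one_zero (x : L) : b.repr (x * b 1) 0 = d * b.repr x 1 := by
  rw [mul_basis_one hb0 hd, ← hb0]; simp

theorem repr_mul_basis_one_one (x : L) : b.repr (x * b 1) 1 = b.repr x 0 := by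
  rw [mul_basis_one hb0 hd, ← hb0]; simp

theorem norm_eq_sq_sub_mul_sq (x : L) :
    Algebra.norm K x = b.repr x 0 ^ 2 - d * b.repr x 1 ^ 2 := by
  rw [Algebra.norm_eq_matrix_det b, Matrix.det_fin_two]
  simp only [Algebra.leftMulMatrix_eq_repr_mul, hb0, mul_one, repr_mul_basis_one_zero hb0 hd,
    repr_mul_basis_one_one hb0 hd]
  ring

end Module.Basis

section QuadraticOrder

open Submodule

variable {R L : Type*} [CommRing R] [CommRing L] [Algebra R L]

def quadraticOrder (π : R) (ρ : L) (m : ℕ) : Submodule R L := span R {1, π ^ m • ρ}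

namespace quadraticOrder

variable (π : R) (ρ : L)

theorem one_mem (m : ℕ) : 1 ∈ quadraticOrder π ρ m := subset_span (Set.mem_insert _ _)

theorem pow_smul_mem (m : ℕ) : π ^ m • ρ ∈ quadraticOrder π ρ m :=
  subset_span (Set.mem_insert_of_mem _ rfl)

theorem antitone : Antitone (quadraticOrder π ρ) := by
  intro i j hij
  refine span_le.2 (Set.insert_subset (one_mem π ρ i) (Set.singleton_subset_iff.2 ?_))
  rw [SetLike.mem_coe, ← Nat.sub_add_cancel hij, pow_add, mul_smul]
  exact smul_mem _ _ (pow_smul_mem π ρ i)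

theorem mul_self_le {d : R} (hd : ρ * ρ = algebraMap R L d) (m : ℕ) :
    quadraticOrder π ρ m * quadraticOrder π ρ m ≤ quadraticOrder π ρ m := by
  rw [quadraticOrder, span_mul_span, span_le, ← quadraticOrder]
  rintro _ ⟨x, hx, y, hy, rfl⟩
  rcases hx with rfl | rfl <;> rcases hy with rfl | rfl <;> dsimp only
  · simpa using one_mem π ρ m
  · simpa using pow_smul_mem π ρ m
  · simpa using pow_smul_mem π ρ m
  · rw [smul_mul_smul_comm, hd, Algebra.algebraMap_eq_smul_one, smul_smul]
    exact smul_mem _ _ (one_mem π ρ m)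

theorem pow_smul_mem_of_le {i n t : ℕ} (h : n ≤ i + t) {x : L}
    (hx : x ∈ quadraticOrder π ρ i) : π ^ t • x ∈ quadraticOrder π ρ n := by
  suffices quadraticOrder π ρ i ≤ (quadraticOrder π ρ n).comap (π ^ t • LinearMap.id) from
    this hx
  refine span_le.2 (Set.insert_subset ?_ (Set.singleton_subset_iff.2 ?_))
  · exact smul_mem _ _ (one_mem π ρ n)
  · show π ^ t • π ^ i • ρ ∈ quadraticOrder π ρ n
    rw [smul_smul, ← pow_add, ← Nat.sub_add_cancel (by omega : n ≤ t + i), pow_add, mul_smul]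
    exact smul_mem _ _ (pow_smul_mem π ρ n)

theorem mem_mul_mul_of_mem {i : ℕ} (j k : ℕ) {x : L} (hx : x ∈ quadraticOrder π ρ i) :
    x ∈ quadraticOrder π ρ i * quadraticOrder π ρ j * quadraticOrder π ρ k := by
  simpa using mul_mem_mul (mul_mem_mul hx (one_mem π ρ j)) (one_mem π ρ k)

theorem mul_mul_le {d : R} (hd : ρ * ρ = algebraMap R L d) {i j k : ℕ} (hij : i ≤ j)
    (hik : i ≤ k) :
    quadraticOrder π ρ i * quadraticOrder π ρ j * quadraticOrder π ρ k ≤ quadraticOrder π ρ i :=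
  calc _ ≤ quadraticOrder π ρ i * quadraticOrder π ρ i * quadraticOrder π ρ i := by
        gcongr <;> exact antitone π ρ ‹_›
    _ ≤ quadraticOrder π ρ i * quadraticOrder π ρ i := by
        gcongr
        exact mul_self_le π ρ hd i
    _ ≤ quadraticOrder π ρ i := mul_self_le π ρ hd i

end quadraticOrder

end QuadraticOrder

section PadicQuadratic

variable {p : ℕ} [Fact p.Prime] {L : Type*} [CommRing L] [Algebra ℚ_[p] L] [Algebra ℤ_[p] L]
  [IsScalarTower ℤ_[p] ℚ_[p] L]

theorem PadicInt.smul_eq_coe_smul (c : ℤ_[p]) (x : L) : c • x = (c : ℚ_[p]) • x := by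
  rw [← algebraMap_smul ℚ_[p] c x, PadicInt.algebraMap_apply]

variable {b : Module.Basis (Fin 2) ℚ_[p] L} (hb0 : b 0 = 1)
include hb0

theorem norm_repr_one_le_of_mem_quadraticOrder {m : ℕ} {x : L}
    (hx : x ∈ quadraticOrder (p : ℤ_[p]) (b 1) m) : ‖b.repr x 1‖ ≤ ‖(p : ℚ_[p]) ^ m‖ := by
  obtain ⟨s, t, rfl⟩ := Submodule.mem_span_pair.1 hx
  have hrepr : b.repr (s • 1 + t • (p : ℤ_[p]) ^ m • b 1) 1 = t * (p : ℚ_[p]) ^ m := by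
    rw [smul_smul, PadicInt.smul_eq_coe_smul, PadicInt.smul_eq_coe_smul, ← hb0]
    simp
  rw [hrepr, norm_mul, PadicInt.padic_norm_e_of_padicInt]
  exact mul_le_of_le_one_left (norm_nonneg _) (PadicInt.norm_le_one t)

theorem exists_valuation_norm_eq_two_mul {u : ℤ_[p]}
    (hu : ¬∃ z : ZMod p, z * z = PadicInt.toZMod u)
    (hd : b 1 * b 1 = algebraMap ℚ_[p] L u) {γ : L} (hγ : γ ≠ 0) {i n : ℕ}
    (h₁ : γ ∈ quadraticOrder (p : ℤ_[p]) (b 1) n)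
    (h₂ : γ * ((p : ℤ_[p]) ^ i • b 1) ∈ quadraticOrder (p : ℤ_[p]) (b 1) n) :
    ∃ m : ℤ, (Algebra.norm ℚ_[p] γ).valuation = 2 * m ∧ (n : ℤ) ≤ i + m := by
  set x := b.repr γ 0
  set y := b.repr γ 1
  have hpi : ‖(p : ℚ_[p]) ^ i‖ ≤ 1 := by
    simpa using pow_le_one₀ (norm_nonneg _) (Padic.norm_p_lt_one (p := p)).le
  have hy : ‖(p : ℚ_[p]) ^ i * y‖ ≤ ‖(p : ℚ_[p]) ^ n‖ := by
    rw [norm_mul]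
    exact (mul_le_of_le_one_left (norm_nonneg _) hpi).trans
      (norm_repr_one_le_of_mem_quadraticOrder hb0 h₁)
  have hx : ‖(p : ℚ_[p]) ^ i * x‖ ≤ ‖(p : ℚ_[p]) ^ n‖ := by
    have := norm_repr_one_le_of_mem_quadraticOrder hb0 h₂
    rwa [mul_smul_comm, PadicInt.smul_eq_coe_smul, map_smul, Finsupp.smul_apply,
      Module.Basis.repr_mul_basis_one_one hb0 hd, PadicInt.coe_pow, PadicInt.coe_natCast,
      smul_eq_mul] at this
  have hxy : max ‖x‖ ‖y‖ ≠ 0 := by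
    intro h
    have hx0 : x = 0 := norm_eq_zero.1 (le_antisymm (h ▸ le_max_left _ _) (norm_nonneg _))
    have hy0 : y = 0 := norm_eq_zero.1 (le_antisymm (h ▸ le_max_right _ _) (norm_nonneg _))
    apply hγ
    rw [b.eq_repr_smul_one_add hb0 γ]
    simp [x, y, hx0, hy0]
  obtain ⟨z, hz, hzn⟩ : ∃ z, ‖z‖ = max ‖x‖ ‖y‖ ∧ ‖(p : ℚ_[p]) ^ i * z‖ ≤ ‖(p : ℚ_[p]) ^ n‖ := by
    rcases max_choice ‖x‖ ‖y‖ with h | h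
    exacts [⟨x, h.symm, hx⟩, ⟨y, h.symm, hy⟩]
  have hz0 : z ≠ 0 := by rw [← norm_ne_zero_iff, hz]; exact hxy
  have hN : ‖Algebra.norm ℚ_[p] γ‖ = ‖z ^ 2‖ := by
    rw [b.norm_eq_sq_sub_mul_sq hb0 hd, Padic.norm_sq_sub_mul_sq hu, norm_pow, hz]
  have hN0 : Algebra.norm ℚ_[p] γ ≠ 0 := by
    rw [← norm_ne_zero_iff, hN]; exact norm_ne_zero_iff.2 (pow_ne_zero 2 hz0)
  refine ⟨z.valuation, ?_, ?_⟩
  · rw [Padic.valuation_eq_of_norm_eq hN0 (pow_ne_zero 2 hz0) hN, Padic.valuation_pow]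
    norm_num
  · have hp0 : (p : ℚ_[p]) ≠ 0 := by exact_mod_cast (Fact.out : p.Prime).ne_zero
    have := (Padic.norm_le_norm_iff_valuation_le (mul_ne_zero (pow_ne_zero i hp0) hz0)
      (pow_ne_zero n hp0)).1 hzn
    rwa [Padic.valuation_mul (pow_ne_zero i hp0) hz0, Padic.valuation_pow, Padic.valuation_pow,
      Padic.valuation_p, mul_one, mul_one] at this

end PadicQuadratic

theorem stmt15_general (p : ℕ) [Fact p.Prime]
    (u : ℤ_[p])
    (hnsq : ¬ ∃ z : ZMod p, z * z = PadicInt.toZMod u)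
    (L : Type*) [CommRing L] [Algebra ℚ_[p] L] [Algebra ℤ_[p] L]
    [IsScalarTower ℤ_[p] ℚ_[p] L]
    (ρ : L) (bL : Module.Basis (Fin 2) ℚ_[p] L) (hb0 : bL 0 = 1) (hb1 : bL 1 = ρ)
    (hρ : ρ * ρ = algebraMap ℚ_[p] L (u : ℚ_[p]))
    (Sm : ℕ → Submodule ℤ_[p] L)
    (hSm : ∀ i, Sm i = Submodule.span ℤ_[p] ({1, (p : L) ^ i * ρ} : Set L))
    (i j k n : ℕ) (hij : i ≤ j) (hjk : j ≤ k) :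
    (∃ γ : L, γ ≠ 0 ∧ (∀ x ∈ Sm i * Sm j * Sm k, γ * x ∈ Sm n) ∧
        (Algebra.norm ℚ_[p] γ).valuation = 3 * (n : ℤ) - i - j - k)
      ↔ ((i + j + k) % 2 = n % 2 ∧
          ((n : ℤ) - j) + ((n : ℤ) - k) ≥ (n : ℤ) - i) := by
  subst hb1
  have hpow_mul : ∀ (t : ℕ) (x : L), (p : L) ^ t * x = (p : ℤ_[p]) ^ t • x := fun t x => by
    rw [Algebra.smul_def ((p : ℤ_[p]) ^ t) x, map_pow, map_natCast]
  obtain rfl : Sm = quadraticOrder (p : ℤ_[p]) (bL 1) := funext fun m => by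
    rw [hSm, hpow_mul, quadraticOrder]
  constructor
  · rintro ⟨γ, hγ, hmem, hval⟩
    have h₁ := hmem 1 (quadraticOrder.mem_mul_mul_of_mem _ _ j k (quadraticOrder.one_mem _ _ i))
    have h₂ := hmem _ (quadraticOrder.mem_mul_mul_of_mem _ _ j k
      (quadraticOrder.pow_smul_mem (p : ℤ_[p]) (bL 1) i))
    rw [mul_one] at h₁
    obtain ⟨m, hm, hnm⟩ := exists_valuation_norm_eq_two_mul hb0 hnsq hρ hγ h₁ h₂
    omega
  · rintro ⟨hpar, hineq⟩
    obtain ⟨t, ht, hnt⟩ : ∃ t : ℕ, 3 * (n : ℤ) - i - j - k = 2 * t ∧ n ≤ i + t :=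
      ⟨(3 * n - i - j - k) / 2, by omega, by omega⟩
    have : Nontrivial L := nontrivial_of_ne 1 0 (hb0 ▸ bL.ne_zero 0)
    have hρ' : bL 1 * bL 1 = algebraMap ℤ_[p] L u := by
      rwa [IsScalarTower.algebraMap_apply ℤ_[p] ℚ_[p] L, PadicInt.algebraMap_apply]
    refine ⟨(p : L) ^ t, Padic.natCast_pow_ne_zero t, fun x hx => ?_, ?_⟩
    · rw [hpow_mul]
      exact quadraticOrder.pow_smul_mem_of_le _ _ hnt
        (quadraticOrder.mul_mul_le _ _ hρ' hij (hij.trans hjk) hx)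
    · rw [Padic.valuation_norm_natCast_pow, Module.finrank_eq_card_basis bL, Fintype.card_fin]
      omega

/-- With `Sᵢ = ℤ_p + pⁱ√u·ℤ_p` ideals of `Sₙ` (`0 ≤ i ≤ j ≤ k ≤ n`,
`p` odd, `u` a non-square unit), there exists `γ ∈ ℚ_p(√u)^×` with `γ·SᵢSⱼSₖ ⊆ Sₙ` and
`v_p(N(γ)) = 3n − i − j − k` if and only if `i + j + k ≡ n (mod 2)` and
`(n−j) + (n−k) ≥ n − i`. -/
theorem stmt15 (p : ℕ) [Fact p.Prime] (hp : 3 ≤ p)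
    (u : ℤ_[p]) (hu : IsUnit u)
    (hnsq : ¬ ∃ z : ZMod p, z * z = PadicInt.toZMod u)
    (L : Type*) [CommRing L] [Algebra ℚ_[p] L] [Algebra ℤ_[p] L]
    [IsScalarTower ℤ_[p] ℚ_[p] L]
    (ρ : L) (bL : Module.Basis (Fin 2) ℚ_[p] L) (hb0 : bL 0 = 1) (hb1 : bL 1 = ρ)
    (hρ : ρ * ρ = algebraMap ℚ_[p] L (u : ℚ_[p]))
    (Sm : ℕ → Submodule ℤ_[p] L)
    (hSm : ∀ i, Sm i = Submodule.span ℤ_[p] ({1, (p : L) ^ i * ρ} : Set L))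
    (i j k n : ℕ) (hij : i ≤ j) (hjk : j ≤ k) (hkn : k ≤ n) :
    (∃ γ : L, γ ≠ 0 ∧ (∀ x ∈ Sm i * Sm j * Sm k, γ * x ∈ Sm n) ∧
        (Algebra.norm ℚ_[p] γ).valuation = 3 * (n : ℤ) - i - j - k)
      ↔ ((i + j + k) % 2 = n % 2 ∧
          ((n : ℤ) - j) + ((n : ℤ) - k) ≥ (n : ℤ) - i) :=
  stmt15_general p u hnsq L ρ bL hb0 hb1 hρ Sm hSm i j k n hij hjk
end
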